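/- arXiv:1803.06369 — 8 statements merged into one kernel-verified Lean document; each statement's English description precedes it below -/
import Mathlib

section
/- For every integer n ≥ 6, the polynomial q_n(x) = x^3 - (n+1)x^2 + nx - 1 has three distinct real roots λ₁, λ₂, λ₃ satisfying 0 < λ₁ < λ₂ < 1 < λ₃. -/
theorem qn_three_roots (n : ℤ) (hn : 6 ≤ n) :
    ∃ l1 l2 l3 : ℝ,
      l1^3 - (n+1)*l1^2 + n*l1 - 1 = 0 ∧
      l2^3 - (n+1)*l2^2 + n*l2 - 1 = 0 ∧
      l3^3 - (n+1)*l3^2 + n*l3 - 1 = 0 ∧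
      0 < l1 ∧ l1 < l2 ∧ l2 < 1 ∧ 1 < l3 := by
  have hn' : (6:ℝ) ≤ (n:ℝ) := by exact_mod_cast hn
  set f : ℝ → ℝ := fun x => x^3 - ((n:ℝ)+1)*x^2 + (n:ℝ)*x - 1 with hf
  have hc : Continuous f := by
    apply Continuous.sub
    apply Continuous.add
    apply Continuous.sub <;> fun_prop
    fun_prop
    fun_prop
  have hf0 : f 0 = -1 := by simp [hf]
  have hfh : f (1/2) = (n:ℝ)/4 - 9/8 := by simp only [hf]; ring
  have hf1 : f 1 = -1 := by simp only [hf]; ring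
  have hfn : f ((n:ℝ)+1) = (n:ℝ)^2 + (n:ℝ) - 1 := by simp only [hf]; ring
  have hfhpos : 0 < f (1/2) := by rw [hfh]; linarith
  have hfnpos : 0 < f ((n:ℝ)+1) := by rw [hfn]; nlinarith
  -- root 1 in (0, 1/2)
  have h1 : (0:ℝ) ∈ Set.Ioo (f 0) (f (1/2)) := by
    exact ⟨by rw [hf0]; norm_num, hfhpos⟩
  obtain ⟨l1, hl1mem, hl1⟩ := intermediate_value_Ioo (by norm_num : (0:ℝ) ≤ 1/2)
    hc.continuousOn h1
  -- root 2 in (1/2, 1)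
  have h2 : (0:ℝ) ∈ Set.Ioo (f 1) (f (1/2)) := by
    exact ⟨by rw [hf1]; norm_num, hfhpos⟩
  obtain ⟨l2, hl2mem, hl2⟩ := intermediate_value_Ioo' (by norm_num : (1:ℝ)/2 ≤ 1)
    hc.continuousOn h2
  -- root 3 in (1, n+1)
  have h3 : (0:ℝ) ∈ Set.Ioo (f 1) (f ((n:ℝ)+1)) := by
    exact ⟨by rw [hf1]; norm_num, hfnpos⟩
  obtain ⟨l3, hl3mem, hl3⟩ := intermediate_value_Ioo (by linarith : (1:ℝ) ≤ (n:ℝ)+1)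
    hc.continuousOn h3
  refine ⟨l1, l2, l3, hl1, hl2, hl3, hl1mem.1, ?_, hl2mem.2, hl3mem.1⟩
  exact lt_trans hl1mem.2 hl2mem.1
end

section
/- For every integer n ≥ 6, the polynomial q_n(x) = x^3 - (n+1)x^2 + nx - 1 has a real root in the open interval (1/(n-1), 1/(n-2)). -/
theorem qn_root_small (n : ℤ) (hn : 6 ≤ n) :
    ∃ x : ℝ, 1/((n:ℝ)-1) < x ∧ x < 1/((n:ℝ)-2) ∧
      x^3 - (n+1)*x^2 + n*x - 1 = 0 := by
  have hn' : (6:ℝ) ≤ (n:ℝ) := by exact_mod_cast hn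
  set a : ℝ := 1/((n:ℝ)-1) with ha
  set b : ℝ := 1/((n:ℝ)-2) with hb
  have h1 : (0:ℝ) < (n:ℝ)-2 := by linarith
  have h2 : (0:ℝ) < (n:ℝ)-1 := by linarith
  have hab : a < b := by
    apply one_div_lt_one_div_of_lt h1; linarith
  set f : ℝ → ℝ := fun x => x^3 - (n+1)*x^2 + n*x - 1 with hf
  have hcont : ContinuousOn f (Set.Icc a b) := by
    apply Continuous.continuousOn; fun_prop
  have hfa : f a < 0 := by
    have key : ((n:ℝ)-1)^3 * f a = 3 - 2*n := by
      simp only [hf, ha]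
      field_simp
      ring
    nlinarith [pow_pos h2 3]
  have hfb : 0 < f b := by
    have key : ((n:ℝ)-2)^3 * f b = n^2 - 7*n + 11 := by
      simp only [hf, hb]
      field_simp
      ring
    nlinarith [pow_pos h1 3]
  have := intermediate_value_Ioo hab.le hcont
  have h0 : (0:ℝ) ∈ Set.Ioo (f a) (f b) := ⟨hfa, hfb⟩
  obtain ⟨x, hx, hfx⟩ := this h0
  exact ⟨x, hx.1, hx.2, hfx⟩
end

section
/- For every integer n ≥ 6, the polynomial q_n(x) = x^3 - (n+1)x^2 + nx - 1 has a real root in the open interval (1 - 1/(n-3), 1 - 1/(n-2)). -/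
theorem qn_root_middle (n : ℤ) (hn : 6 ≤ n) :
    ∃ x : ℝ, 1 - 1/((n:ℝ)-3) < x ∧ x < 1 - 1/((n:ℝ)-2) ∧
      x^3 - (n+1)*x^2 + n*x - 1 = 0 := by
  set N : ℝ := (n : ℝ) with hNdef
  have hN : (6:ℝ) ≤ N := by rw [hNdef]; exact_mod_cast hn
  have h3 : (0:ℝ) < N - 3 := by linarith
  have h2 : (0:ℝ) < N - 2 := by linarith
  set f : ℝ → ℝ := fun x => x^3 - (N+1)*x^2 + N*x - 1 with hf
  set a : ℝ := 1 - 1/(N-3) with ha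
  set b : ℝ := 1 - 1/(N-2) with hb
  have hab : a < b := by
    have : 1/(N-2) < 1/(N-3) := by
      apply one_div_lt_one_div_of_lt h3; linarith
    simp only [ha, hb]; linarith
  have hfa : f a = (N^2 - 7*N + 11)/(N-3)^3 := by
    simp only [hf, ha]; field_simp; ring
  have hfb : f b = -1/(N-2)^3 := by
    simp only [hf, hb]; field_simp; ring
  have hfapos : 0 < f a := by
    rw [hfa]; apply div_pos (by nlinarith) (by positivity)
  have hfbneg : f b < 0 := by
    rw [hfb]
    apply div_neg_of_neg_of_pos (by norm_num) (by positivity)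
  have hcont : ContinuousOn f (Set.Icc a b) := by
    apply Continuous.continuousOn; fun_prop
  have hsub := intermediate_value_Ioo' (le_of_lt hab) hcont
  have h0 : (0:ℝ) ∈ Set.Ioo (f b) (f a) := ⟨hfbneg, hfapos⟩
  obtain ⟨x, hx, hfx⟩ := hsub h0
  exact ⟨x, hx.1, hx.2, hfx⟩
end

section
/- Any finite product of matrices from the set {P_n : n ≥ 6}, where P_n has rows (0,1,0), (0,1,1), (1,0,n), has all entries nonnegative, and the cube of any such product has all entries strictly positive (i.e., the product is a primitive nonnegative matrix). -/
open Matrix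
abbrev M3 := Matrix (Fin 3) (Fin 3) ℤ
def Pm (n : ℤ) : M3 := !![0, 1, 0; 0, 1, 1; 1, 0, n]

def Nn (W : M3) : Prop := ∀ i j, 0 ≤ W i j
def Pp (W : M3) : Prop := ∀ i j, 0 < W i j
def patA (W : M3) : Prop :=
  W 0 0 = 0 ∧ W 1 0 = 0 ∧ W 0 2 = 0 ∧ W 2 1 = 0 ∧
  0 < W 0 1 ∧ 0 < W 1 1 ∧ 0 < W 1 2 ∧ 0 < W 2 0 ∧ 0 < W 2 2
def patB (W : M3) : Prop :=
  0 < W 0 1 ∧ 0 < W 0 2 ∧ 0 < W 1 0 ∧ 0 < W 1 1 ∧ 0 < W 1 2 ∧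
  0 < W 2 0 ∧ 0 < W 2 1 ∧ 0 < W 2 2
def Good (W : M3) : Prop := Nn W ∧ (patA W ∨ patB W ∨ Pp W)

lemma mul_entry (A B : M3) (i j : Fin 3) :
    (A * B) i j = A i 0 * B 0 j + A i 1 * B 1 j + A i 2 * B 2 j := by
  simp [Matrix.mul_apply, Fin.sum_univ_three]

lemma entry_nonneg {A B : M3} (hA : Nn A) (hB : Nn B) : Nn (A * B) := by
  intro i j
  rw [Matrix.mul_apply]
  exact Finset.sum_nonneg fun k _ => mul_nonneg (hA i k) (hB k j)

lemma entry_pos {A B : M3} (hA : Nn A) (hB : Nn B) (k : Fin 3) {i j : Fin 3}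
    (h1 : 0 < A i k) (h2 : 0 < B k j) : 0 < (A * B) i j := by
  rw [Matrix.mul_apply]
  exact Finset.sum_pos' (fun m _ => mul_nonneg (hA i m) (hB m j))
    ⟨k, Finset.mem_univ k, mul_pos h1 h2⟩

lemma goodA (n : ℤ) (hn : 6 ≤ n) : Good (Pm n) := by
  constructor
  · intro i j; fin_cases i <;> fin_cases j <;> simp [Pm] <;> linarith
  · left
    refine ⟨?_, ?_, ?_, ?_, ?_, ?_, ?_, ?_, ?_⟩ <;> simp [Pm] <;> linarith

lemma step (n : ℤ) (hn : 6 ≤ n) {W : M3} (h : Good W) : Good (Pm n * W) := by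
  obtain ⟨hN, hpat⟩ := h
  have hPN : Nn (Pm n) := by
    intro i j; fin_cases i <;> fin_cases j <;> simp [Pm] <;> linarith
  have hn0 : (0:ℤ) < n := by linarith
  refine ⟨entry_nonneg hPN hN, ?_⟩
  have e0 : ∀ j, (Pm n * W) 0 j = W 1 j := by
    intro j; rw [mul_entry]; simp [Pm]
  have e1 : ∀ j, (Pm n * W) 1 j = W 1 j + W 2 j := by
    intro j; rw [mul_entry]; simp [Pm]
  have e2 : ∀ j, (Pm n * W) 2 j = W 0 j + n * W 2 j := by
    intro j; rw [mul_entry]; simp [Pm]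
  rcases hpat with hA | hB | hC
  · -- A goes to B
    obtain ⟨z00, z10, z02, z21, p01, p11, p12, p20, p22⟩ := hA
    right; left
    refine ⟨?_, ?_, ?_, ?_, ?_, ?_, ?_, ?_⟩
    · rw [e0]; linarith
    · rw [e0]; linarith
    · rw [e1]; linarith
    · rw [e1]; linarith
    · rw [e1]; linarith
    · rw [e2]; nlinarith
    · rw [e2]; nlinarith
    · rw [e2]; nlinarith
  · -- B goes to Pp
    obtain ⟨p01, p02, p10, p11, p12, p20, p21, p22⟩ := hB
    right; right
    intro i j
    have h1j : 0 < W 1 j := by fin_cases j <;> [exact p10; exact p11; exact p12]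
    have h2j : 0 < W 2 j := by fin_cases j <;> [exact p20; exact p21; exact p22]
    have := hN 0 j
    fin_cases i
    · show 0 < (Pm n * W) 0 j; rw [e0]; linarith
    · show 0 < (Pm n * W) 1 j; rw [e1]; linarith
    · show 0 < (Pm n * W) 2 j; rw [e2]; nlinarith
  · -- Pp stays Pp
    right; right
    intro i j
    fin_cases i
    · show 0 < (Pm n * W) 0 j; rw [e0]; exact hC 1 j
    · show 0 < (Pm n * W) 1 j; rw [e1]; have := hC 1 j; have := hC 2 j; linarith
    · show 0 < (Pm n * W) 2 j; rw [e2]; have := hC 0 j; have := hC 2 j; nlinarith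

lemma good_prod : ∀ (l : List ℤ), l ≠ [] → (∀ n ∈ l, 6 ≤ n) → Good ((l.map Pm).prod)
  | [], h, _ => absurd rfl h
  | [n], _, hl => by
      simpa using goodA n (hl n (by simp))
  | n :: m :: t, _, hl => by
      rw [List.map_cons, List.prod_cons]
      exact step n (hl n (by simp))
        (good_prod (m :: t) (by simp) (fun x hx => hl x (List.mem_cons_of_mem n hx)))

lemma sqA {W : M3} (hN : Nn W) (hA : patA W) : patB (W * W) := by
  obtain ⟨z00, z10, z02, z21, p01, p11, p12, p20, p22⟩ := hA
  refine ⟨?_, ?_, ?_, ?_, ?_, ?_, ?_, ?_⟩ <;>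
    rw [mul_entry] <;> simp only [z00, z10, z02, z21, zero_mul, mul_zero, add_zero, zero_add] <;> nlinarith

lemma cube_pos {W : M3} (h : Good W) : Pp (W * W * W) := by
  obtain ⟨hN, hpat⟩ := h
  have hN2 : Nn (W * W) := entry_nonneg hN hN
  rcases hpat with hA | hB | hC
  · have hB2 := sqA hN hA
    obtain ⟨z00, z10, z02, z21, p01, p11, p12, p20, p22⟩ := hA
    obtain ⟨q01, q02, q10, q11, q12, q20, q21, q22⟩ := hB2
    intro i j
    have hi2 : 0 < (W * W) i 2 := by fin_cases i <;> [exact q02; exact q12; exact q22]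
    have hi1 : 0 < (W * W) i 1 := by fin_cases i <;> [exact q01; exact q11; exact q21]
    fin_cases j
    · exact entry_pos hN2 hN 2 hi2 p20
    · exact entry_pos hN2 hN 1 hi1 p11
    · exact entry_pos hN2 hN 1 hi1 p12
  · obtain ⟨p01, p02, p10, p11, p12, p20, p21, p22⟩ := hB
    have hcol : ∀ i, 0 < W i 1 := by intro i; fin_cases i <;> [exact p01; exact p11; exact p21]
    have hrow : ∀ j, 0 < W 1 j := by intro j; fin_cases j <;> [exact p10; exact p11; exact p12]
    have h2 : Pp (W * W) := fun i j => entry_pos hN hN 1 (hcol i) (hrow j)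
    exact fun i j => entry_pos hN2 hN 1 (h2 i 1) (hrow j)
  · have h2 : Pp (W * W) := fun i j => entry_pos hN hN 0 (hC i 0) (hC 0 j)
    exact fun i j => entry_pos hN2 hN 0 (h2 i 0) (hC 0 j)

theorem product_Pn_primitive (l : List ℤ) (hne : l ≠ [])
    (hl : ∀ n ∈ l, 6 ≤ n) :
    let P : ℤ → Matrix (Fin 3) (Fin 3) ℤ := fun n => !![0, 1, 0; 0, 1, 1; 1, 0, n]
    let W : Matrix (Fin 3) (Fin 3) ℤ := (l.map P).prod
    (∀ i j, 0 ≤ W i j) ∧ (∀ i j, 0 < (W^3) i j) := by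
  intro P W
  have hP : P = Pm := rfl
  have hW : W = (l.map Pm).prod := by rw [show W = (l.map P).prod from rfl, hP]
  have hG : Good W := hW ▸ good_prod l hne hl
  refine ⟨hG.1, ?_⟩
  have h3 : W ^ 3 = W * W * W := by rw [pow_succ, pow_two]
  rw [h3]
  exact cube_pos hG
end

section
/- Let W be any finite nonempty product of matrices from {M_n : n ≥ 6}, where M_n has rows (0,1,0), (0,0,1), (1,-n,n+1). Then det(W) = 1, and the eigenvalues of W are real, positive, and satisfy 0 < λ₁ < λ₂ < 1 < λ₃ when listed in increasing order. -/
namespace MonoidPisotAux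
open Polynomial

structure Inv (a b c d e f g h i : ℤ) : Prop where
  r0x : 1 ≤ a
  r0y : 5*a ≤ -b
  r0w0 : 0 ≤ b + c
  r0w1 : b + c ≤ a
  d1x : 1 ≤ d - a
  d1y : 5*(d-a) ≤ -(e-b)
  d1w0 : 0 ≤ (e-b) + (f-c)
  d1w1 : (e-b) + (f-c) ≤ d - a
  d2x : 1 ≤ g - d
  d2y : 5*(g-d) ≤ -(h-e)
  d2w0 : 0 ≤ (h-e) + (i-f)
  d2w1 : (h-e) + (i-f) ≤ g - d
  C1_0 : 0 ≤ b*f - c*e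
  C1_1 : 0 ≤ c*d - a*f
  C1_2 : 0 ≤ a*e - b*d
  C2_0 : b*f - c*e ≤ e*i - f*h
  C2_1 : c*d - a*f ≤ f*g - d*i
  C2_2 : a*e - b*d ≤ d*h - e*g
  C3_0 : e*i - f*h ≤ -(h*c - i*b)
  C3_1 : f*g - d*i ≤ -(i*a - g*c)
  C3_2 : d*h - e*g ≤ -(g*b - h*a)
  C4_0 : 5*(-(h*c - i*b)) ≤ 8*(e*i - f*h)
  C4_1 : 5*(-(i*a - g*c)) ≤ 8*(f*g - d*i)
  C4_2 : 5*(-(g*b - h*a)) ≤ 8*(d*h - e*g)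
  D1_0 : 4*(f*g - d*i) ≤ e*i - f*h
  D1_1 : 4*(d*h - e*g) ≤ f*g - d*i
  D2_0 : 4*(c*d - a*f) ≤ b*f - c*e
  D2_1 : 4*(a*e - b*d) ≤ c*d - a*f
  D3_0 : (b*f - c*e) - 4*(c*d - a*f) ≤ (e*i - f*h) - 4*(f*g - d*i)
  D3_1 : (c*d - a*f) - 4*(a*e - b*d) ≤ (f*g - d*i) - 4*(d*h - e*g)
  D4_0 : 4*(-(i*a - g*c)) ≤ -(h*c - i*b)
  D4_1 : 4*(-(g*b - h*a)) ≤ -(i*a - g*c)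
  D5_0 : (-(h*c - i*b)) - 4*(-(i*a - g*c)) ≤ 3*((e*i - f*h) - 4*(f*g - d*i))
  D5_1 : (-(i*a - g*c)) - 4*(-(g*b - h*a)) ≤ 3*((f*g - d*i) - 4*(d*h - e*g))
  X1 : e*i - f*h ≤ i - f
  X2 : e*i - f*h + 1 ≤ a + e + i
  X3 : 32*(i - f) ≤ (e*i - f*h)^2
  X4 : 8*i ≤ (e*i - f*h)^2
  A1 : 2 ≤ e*i - f*h

section step
variable {a b c d e f g h i n : ℤ}

theorem sC2 {c0 c1 n : ℤ} (h0 : 0 ≤ c0) (h4 : 5*(-c1) ≤ 8*c0) (hn : 6 ≤ n) :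
    c0 ≤ n*c0 + c1 := by nlinarith [mul_nonneg (by linarith : (0:ℤ) ≤ n - 6) h0]

theorem sC3 {c0 c1 c2 n : ℤ} (h2 : c2 ≤ c0) (h3 : c0 ≤ -c1) (h0 : 0 ≤ c0) :
    n*c0 + c1 ≤ (n+1)*c0 - c2 := by nlinarith

theorem sC4 {c0 c1 c2 n : ℤ} (hc2 : 0 ≤ c2) (h4 : 5*(-c1) ≤ 8*c0) (h0 : 0 ≤ c0) (hn : 6 ≤ n) :
    5*((n+1)*c0 - c2) ≤ 8*(n*c0 + c1) := by
  nlinarith [mul_nonneg (by linarith : (0:ℤ) ≤ n - 6) h0]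

theorem sD1 {c00 c01 c10 c11 n : ℤ} (hU : 0 ≤ c00 - 4*c01)
    (hD5 : (-c10) - 4*(-c11) ≤ 3*(c00 - 4*c01)) (hn : 6 ≤ n) :
    4*(n*c01 + c11) ≤ n*c00 + c10 := by
  nlinarith [mul_nonneg (by linarith : (0:ℤ) ≤ n - 6) hU]

theorem sD3 {c00 c01 c10 c11 n : ℤ} (hU : 0 ≤ c00 - 4*c01)
    (hD5 : (-c10) - 4*(-c11) ≤ 3*(c00 - 4*c01)) (hn : 6 ≤ n) :
    c00 - 4*c01 ≤ (n*c00 + c10) - 4*(n*c01 + c11) := by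
  nlinarith [mul_nonneg (by linarith : (0:ℤ) ≤ n - 6) hU]

theorem sD4 {c00 c01 c20 c21 n : ℤ} (hU : 0 ≤ c00 - 4*c01)
    (hD3 : c20 - 4*c21 ≤ c00 - 4*c01) (hn : 6 ≤ n) :
    4*(-(c21 - (n+1)*c01)) ≤ -(c20 - (n+1)*c00) := by
  nlinarith [mul_nonneg (by linarith : (0:ℤ) ≤ n) hU]

theorem sD5 {c00 c01 c10 c11 c20 c21 n : ℤ} (hU : 0 ≤ c00 - 4*c01) (hw : 0 ≤ c20 - 4*c21)
    (hD5 : (-c10) - 4*(-c11) ≤ 3*(c00 - 4*c01)) (hn : 6 ≤ n) :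
    (-(c20 - (n+1)*c00)) - 4*(-(c21 - (n+1)*c01)) ≤
      3*((n*c00 + c10) - 4*(n*c01 + c11)) := by
  nlinarith [mul_nonneg (by linarith : (0:ℤ) ≤ n - 6) hU]

theorem sX3 {c0 c1 zr0 zd2 zr2 n : ℤ} (h0 : 0 ≤ c0) (h4 : 5*(-c1) ≤ 8*c0)
    (h32 : 32*zd2 ≤ c0^2) (h8 : 8*zr2 ≤ c0^2) (hz : zr0 ≤ zr2) (hn : 6 ≤ n) :
    32*(zr0 + n*zd2) ≤ (n*c0 + c1)^2 := by
  have hY : (5*n-8)*c0 ≤ 5*(n*c0 + c1) := by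
    nlinarith [mul_nonneg (by linarith : (0:ℤ) ≤ n - 6) h0]
  have hY0 : (0:ℤ) ≤ (5*n-8)*c0 := mul_nonneg (by linarith) h0
  have hsq : ((5*n-8)*c0)^2 ≤ (5*(n*c0 + c1))^2 := by
    have := mul_le_mul hY hY hY0 (by linarith)
    nlinarith [this]
  nlinarith [hsq, mul_le_mul_of_nonneg_left h32 (by linarith : (0:ℤ) ≤ 25*n),
    mul_nonneg (by nlinarith : (0:ℤ) ≤ 25*n^2 - 105*n - 36) (sq_nonneg c0)]

theorem sX4 {c0 c1 zr0 zd2 zr2 n : ℤ} (h0 : 0 ≤ c0) (h4 : 5*(-c1) ≤ 8*c0)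
    (h32 : 32*zd2 ≤ c0^2) (h8 : 8*zr2 ≤ c0^2) (hz : zr0 ≤ zr2) (hn : 6 ≤ n) :
    8*(zr0 + n*zd2 + zr2) ≤ (n*c0 + c1)^2 := by
  have hY : (5*n-8)*c0 ≤ 5*(n*c0 + c1) := by
    nlinarith [mul_nonneg (by linarith : (0:ℤ) ≤ n - 6) h0]
  have hY0 : (0:ℤ) ≤ (5*n-8)*c0 := mul_nonneg (by linarith) h0
  have hsq : ((5*n-8)*c0)^2 ≤ (5*(n*c0 + c1))^2 := by
    have := mul_le_mul hY hY hY0 (by linarith)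
    nlinarith [this]
  nlinarith [hsq, mul_le_mul_of_nonneg_left h32 (by linarith : (0:ℤ) ≤ 25*n),
    mul_nonneg (by nlinarith : (0:ℤ) ≤ 100*n^2 - 345*n + 56) (sq_nonneg c0)]

theorem sA1 {c0 c1 n : ℤ} (h0 : 2 ≤ c0) (h4 : 5*(-c1) ≤ 8*c0) (hn : 6 ≤ n) :
    2 ≤ n*c0 + c1 := by
  nlinarith [mul_nonneg (by linarith : (0:ℤ) ≤ n - 6) (by linarith : (0:ℤ) ≤ c0)]

set_option maxHeartbeats 1000000 in
theorem Inv.step (H : Inv a b c d e f g h i) (hn : 6 ≤ n) :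
    Inv d e f g h i (a - n*d + (n+1)*g) (b - n*e + (n+1)*h) (c - n*f + (n+1)*i) := by
  obtain ⟨r0x, r0y, r0w0, r0w1, d1x, d1y, d1w0, d1w1, d2x, d2y, d2w0, d2w1,
    C1_0, C1_1, C1_2, C2_0, C2_1, C2_2, C3_0, C3_1, C3_2, C4_0, C4_1, C4_2,
    D1_0, D1_1, D2_0, D2_1, D3_0, D3_1, D4_0, D4_1, D5_0, D5_1, X1, X2, X3, X4, A1⟩ := H
  have h6 : (0:ℤ) ≤ n - 6 := by linarith
  have hn0 : (0:ℤ) ≤ n := by linarith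
  have hc00 : 0 ≤ e*i - f*h := by linarith
  have hc01 : 0 ≤ f*g - d*i := by linarith
  have hc02 : 0 ≤ d*h - e*g := by linarith
  have hU0 : 0 ≤ (e*i - f*h) - 4*(f*g - d*i) := by linarith
  have hU1 : 0 ≤ (f*g - d*i) - 4*(d*h - e*g) := by linarith
  have hc10 : h*c - i*b ≤ 0 := by linarith
  have hd2 : 2 ≤ d := by linarith
  have hw2 : 0 ≤ h + i := by linarith
  have hc5 : 5 ≤ c := by linarith
  have hcf : c ≤ f := by linarith
  have hfi : f ≤ i := by linarith
  have hci : c ≤ i := by linarith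
  refine ⟨?_, ?_, ?_, ?_, ?_, ?_, ?_, ?_, ?_, ?_, ?_, ?_, ?_, ?_, ?_, ?_, ?_, ?_, ?_, ?_, ?_, ?_, ?_, ?_, ?_, ?_, ?_, ?_, ?_, ?_, ?_, ?_, ?_, ?_, ?_, ?_, ?_, ?_, ?_⟩
  · linarith
  · linarith
  · linarith
  · linarith
  · exact d2x
  · exact d2y
  · exact d2w0
  · exact d2w1
  · linarith [mul_le_mul_of_nonneg_left d2x hn0]
  · linarith [mul_le_mul_of_nonneg_left d2y hn0, r0y]
  · linarith [mul_nonneg hn0 d2w0]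
  · linarith [mul_le_mul_of_nonneg_left d2w1 hn0, r0w1]
  · linarith [hc00]
  · linarith [hc01]
  · linarith [hc02]
  · linarith [sC2 hc00 C4_0 hn]
  · linarith [sC2 hc01 C4_1 hn]
  · linarith [sC2 hc02 C4_2 hn]
  · linarith [sC3 (n := n) C2_0 C3_0 hc00]
  · linarith [sC3 (n := n) C2_1 C3_1 hc01]
  · linarith [sC3 (n := n) C2_2 C3_2 hc02]
  · linarith [sC4 C1_0 C4_0 hc00 hn]
  · linarith [sC4 C1_1 C4_1 hc01 hn]
  · linarith [sC4 C1_2 C4_2 hc02 hn]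
  · linarith [sD1 hU0 D5_0 hn]
  · linarith [sD1 hU1 D5_1 hn]
  · linarith [D1_0]
  · linarith [D1_1]
  · linarith [sD3 hU0 D5_0 hn]
  · linarith [sD3 hU1 D5_1 hn]
  · linarith [sD4 hU0 D3_0 hn]
  · linarith [sD4 hU1 D3_1 hn]
  · linarith [sD5 hU0 (by linarith : 0 ≤ (b*f - c*e) - 4*(c*d - a*f)) D5_0 hn]
  · linarith [sD5 hU1 (by linarith : 0 ≤ (c*d - a*f) - 4*(a*e - b*d)) D5_1 hn]
  · linarith [mul_le_mul_of_nonneg_left X1 hn0, hc10, hc5]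
  · linarith [mul_le_mul_of_nonneg_left X1 hn0, hc10, hd2, hw2, hc5]
  · linarith [sX3 (zr0 := c) (zd2 := i - f) (zr2 := i) hc00 C4_0 X3 X4 hci hn]
  · linarith [sX4 (zr0 := c) (zd2 := i - f) (zr2 := i) hc00 C4_0 X3 X4 hci hn]
  · linarith [sA1 A1 C4_0 hn]


end step

theorem consequences {a b c d e f g h i : ℤ}
    (r0x : 1 ≤ a) (r0y : 5*a ≤ -b) (r0w0 : 0 ≤ b + c) (r0w1 : b + c ≤ a)
    (d1x : 1 ≤ d - a) (d1y : 5*(d-a) ≤ -(e-b)) (d1w0 : 0 ≤ (e-b) + (f-c)) (d1w1 : (e-b) + (f-c) ≤ d - a)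
    (d2x : 1 ≤ g - d) (d2y : 5*(g-d) ≤ -(h-e)) (d2w0 : 0 ≤ (h-e) + (i-f)) (d2w1 : (h-e) + (i-f) ≤ g - d)
    (C1_1 : 0 ≤ c*d - a*f) (C1_2 : 0 ≤ a*e - b*d)
    (C2_1 : c*d - a*f ≤ f*g - d*i) (C2_2 : a*e - b*d ≤ d*h - e*g)
    (C3_1 : f*g - d*i ≤ -(i*a - g*c))
    (C4_0 : 5*(-(h*c - i*b)) ≤ 8*(e*i - f*h))
    (D1_1 : 4*(d*h - e*g) ≤ f*g - d*i)
    (D4_0 : 4*(-(i*a - g*c)) ≤ -(h*c - i*b))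
    (X2 : e*i - f*h + 1 ≤ a + e + i)
    (X3 : 32*(i - f) ≤ (e*i - f*h)^2)
    (X4 : 8*i ≤ (e*i - f*h)^2)
    (A1 : 2 ≤ e*i - f*h) :
    1 ≤ (e*i - f*h) + (i*a - g*c) + (a*e - b*d) ∧
    (e*i - f*h) + (i*a - g*c) + (a*e - b*d) + 1 ≤ a + e + i ∧
    4*(a + e + i) ≤ ((e*i - f*h) + (i*a - g*c) + (a*e - b*d))^2 := by
  have hc02 : 0 ≤ d*h - e*g := le_trans C1_2 C2_2
  have hc01 : 0 ≤ f*g - d*i := le_trans C1_1 C2_1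
  have h20 : 12*(e*i - f*h) ≤ 20*((e*i - f*h) + (i*a - g*c) + (a*e - b*d)) := by linarith
  have hs1 : 1 ≤ (e*i - f*h) + (i*a - g*c) + (a*e - b*d) := by linarith
  refine ⟨hs1, by linarith, ?_⟩
  have hci : c ≤ i := by linarith
  have h160 : 160*(a + e + i) ≤ 13*(e*i - f*h)^2 := by linarith
  have hsq := mul_le_mul h20 h20 (by linarith) (by linarith)
  nlinarith [hsq, h160, sq_nonneg (e*i - f*h)]

set_option maxHeartbeats 2000000 in
theorem base3 {n1 n2 n3 : ℤ} (h1 : 6 ≤ n1) (h2 : 6 ≤ n2) (h3 : 6 ≤ n3) :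
    Inv 1 (-n3) (n3+1) (n2+1) (1-(n2+1)*n3) ((n2+1)*n3+1)
      ((n1+1)*(n2+1)-n1) (n1*n3+(n1+1)*(1-(n2+1)*n3)) (1-n1*(n3+1)+(n1+1)*((n2+1)*n3+1)) := by
  have p1 : (0:ℤ) ≤ n1 - 6 := by linarith
  have p2 : (0:ℤ) ≤ n2 - 6 := by linarith
  have p3 : (0:ℤ) ≤ n3 - 6 := by linarith
  have p12 := mul_nonneg p1 p2
  have p13 := mul_nonneg p1 p3
  have p23 := mul_nonneg p2 p3
  have p123 := mul_nonneg p12 p3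
  have hc00 : 133 ≤ (1-(n2+1)*n3)*(1-n1*(n3+1)+(n1+1)*((n2+1)*n3+1))
      - ((n2+1)*n3+1)*(n1*n3+(n1+1)*(1-(n2+1)*n3)) := by
    nlinarith [p1, p2, p3, p12, p13, p23, p123]
  have hif2 : (1-n1*(n3+1)+(n1+1)*((n2+1)*n3+1)) - ((n2+1)*n3+1)
      ≤ 2*((1-(n2+1)*n3)*(1-n1*(n3+1)+(n1+1)*((n2+1)*n3+1))
        - ((n2+1)*n3+1)*(n1*n3+(n1+1)*(1-(n2+1)*n3))) := by
    nlinarith [p1, p2, p3, p12, p13, p23, p123]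
  have hi3 : (1-n1*(n3+1)+(n1+1)*((n2+1)*n3+1))
      ≤ 3*((1-(n2+1)*n3)*(1-n1*(n3+1)+(n1+1)*((n2+1)*n3+1))
        - ((n2+1)*n3+1)*(n1*n3+(n1+1)*(1-(n2+1)*n3))) := by
    nlinarith [p1, p2, p3, p12, p13, p23, p123]
  refine ⟨?_, ?_, ?_, ?_, ?_, ?_, ?_, ?_, ?_, ?_, ?_, ?_, ?_, ?_, ?_, ?_, ?_, ?_, ?_, ?_,
    ?_, ?_, ?_, ?_, ?_, ?_, ?_, ?_, ?_, ?_, ?_, ?_, ?_, ?_, ?_, ?_, ?_, ?_, ?_⟩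
  · linarith
  · linarith
  · linarith
  · linarith
  · linarith
  · nlinarith [p23]
  · nlinarith [p23]
  · nlinarith [p23]
  · nlinarith [p12, p1, p2]
  · nlinarith [p12, p13, p23, p123, p1, p2, p3]
  · nlinarith [p12, p13, p23, p123, p1, p2, p3]
  · nlinarith [p12, p13, p23, p123, p1, p2, p3]
  · nlinarith [p12, p13, p23, p123, p1, p2, p3]
  · nlinarith [p12, p13, p23, p123, p1, p2, p3]
  · nlinarith [p12, p13, p23, p123, p1, p2, p3]
  · nlinarith [p12, p13, p23, p123, p1, p2, p3]
  · nlinarith [p12, p13, p23, p123, p1, p2, p3]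
  · nlinarith [p12, p13, p23, p123, p1, p2, p3]
  · nlinarith [p12, p13, p23, p123, p1, p2, p3]
  · nlinarith [p12, p13, p23, p123, p1, p2, p3]
  · nlinarith [p12, p13, p23, p123, p1, p2, p3]
  · nlinarith [p12, p13, p23, p123, p1, p2, p3, mul_nonneg p23 p3, mul_nonneg p13 p3]
  · nlinarith [p12, p13, p23, p123, p1, p2, p3, mul_nonneg p23 p3, mul_nonneg p13 p3]
  · nlinarith [p12, p13, p23, p123, p1, p2, p3, mul_nonneg p23 p3, mul_nonneg p13 p3]
  · nlinarith [p12, p13, p23, p123, p1, p2, p3]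
  · nlinarith [p12, p13, p23, p123, p1, p2, p3]
  · nlinarith [p12, p13, p23, p123, p1, p2, p3]
  · nlinarith [p12, p13, p23, p123, p1, p2, p3]
  · nlinarith [p12, p13, p23, p123, p1, p2, p3]
  · nlinarith [p12, p13, p23, p123, p1, p2, p3]
  · nlinarith [p12, p13, p23, p123, p1, p2, p3]
  · nlinarith [p12, p13, p23, p123, p1, p2, p3]
  · nlinarith [p12, p13, p23, p123, p1, p2, p3, mul_nonneg p23 p3, mul_nonneg p13 p3]
  · nlinarith [p12, p13, p23, p123, p1, p2, p3, mul_nonneg p23 p3, mul_nonneg p13 p3]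
  · nlinarith [p12, p13, p23, p123, p1, p2, p3]
  · nlinarith [p12, p13, p23, p123, p1, p2, p3]
  · nlinarith [hc00, hif2, mul_nonneg (by linarith : (0:ℤ) ≤ (1-(n2+1)*n3)*(1-n1*(n3+1)+(n1+1)*((n2+1)*n3+1)) - ((n2+1)*n3+1)*(n1*n3+(n1+1)*(1-(n2+1)*n3)) - 64) (by linarith : (0:ℤ) ≤ (1-(n2+1)*n3)*(1-n1*(n3+1)+(n1+1)*((n2+1)*n3+1)) - ((n2+1)*n3+1)*(n1*n3+(n1+1)*(1-(n2+1)*n3)))]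
  · nlinarith [hc00, hi3, mul_nonneg (by linarith : (0:ℤ) ≤ (1-(n2+1)*n3)*(1-n1*(n3+1)+(n1+1)*((n2+1)*n3+1)) - ((n2+1)*n3+1)*(n1*n3+(n1+1)*(1-(n2+1)*n3)) - 24) (by linarith : (0:ℤ) ≤ (1-(n2+1)*n3)*(1-n1*(n3+1)+(n1+1)*((n2+1)*n3+1)) - ((n2+1)*n3+1)*(n1*n3+(n1+1)*(1-(n2+1)*n3)))]
  · linarith [hc00]


def Mz (n : ℤ) : Matrix (Fin 3) (Fin 3) ℤ := !![0, 1, 0; 0, 0, 1; 1, -n, n+1]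

theorem Mz_mul (n : ℤ) (W : Matrix (Fin 3) (Fin 3) ℤ) :
    Mz n * W = Matrix.of ![![W 1 0, W 1 1, W 1 2], ![W 2 0, W 2 1, W 2 2],
      ![W 0 0 - n*W 1 0 + (n+1)*W 2 0, W 0 1 - n*W 1 1 + (n+1)*W 2 1,
        W 0 2 - n*W 1 2 + (n+1)*W 2 2]] := by
  ext i j
  fin_cases i <;> fin_cases j <;>
    simp [Mz, Matrix.mul_apply, Fin.sum_univ_three] <;> ring

theorem det_Mz (n : ℤ) : (Mz n).det = 1 := by
  simp [Mz, Matrix.det_fin_three]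

theorem det_prod (l : List ℤ) : ((l.map Mz).prod).det = 1 := by
  induction l with
  | nil => simp
  | cons n t ih => rw [List.map_cons, List.prod_cons, Matrix.det_mul, det_Mz, one_mul, ih]

theorem charpoly_W (W : Matrix (Fin 3) (Fin 3) ℤ) :
    (W.map (Int.cast : ℤ → ℝ)).charpoly
      = X^3 - C ((W 0 0 + W 1 1 + W 2 2 : ℤ) : ℝ) * X^2
        + C (((W 1 1 * W 2 2 - W 1 2 * W 2 1) + (W 2 2 * W 0 0 - W 2 0 * W 0 2)
            + (W 0 0 * W 1 1 - W 0 1 * W 1 0) : ℤ) : ℝ) * X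
        - C ((W.det : ℤ) : ℝ) := by
  have h01 : (W.map (Int.cast : ℤ → ℝ)).charmatrix 0 1 = -C ((W 0 1 : ℤ) : ℝ) := by
    rw [Matrix.charmatrix_apply_ne _ _ _ (by decide)]; simp [Matrix.map_apply]
  have h02 : (W.map (Int.cast : ℤ → ℝ)).charmatrix 0 2 = -C ((W 0 2 : ℤ) : ℝ) := by
    rw [Matrix.charmatrix_apply_ne _ _ _ (by decide)]; simp [Matrix.map_apply]
  have h10 : (W.map (Int.cast : ℤ → ℝ)).charmatrix 1 0 = -C ((W 1 0 : ℤ) : ℝ) := by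
    rw [Matrix.charmatrix_apply_ne _ _ _ (by decide)]; simp [Matrix.map_apply]
  have h12 : (W.map (Int.cast : ℤ → ℝ)).charmatrix 1 2 = -C ((W 1 2 : ℤ) : ℝ) := by
    rw [Matrix.charmatrix_apply_ne _ _ _ (by decide)]; simp [Matrix.map_apply]
  have h20 : (W.map (Int.cast : ℤ → ℝ)).charmatrix 2 0 = -C ((W 2 0 : ℤ) : ℝ) := by
    rw [Matrix.charmatrix_apply_ne _ _ _ (by decide)]; simp [Matrix.map_apply]
  have h21 : (W.map (Int.cast : ℤ → ℝ)).charmatrix 2 1 = -C ((W 2 1 : ℤ) : ℝ) := by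
    rw [Matrix.charmatrix_apply_ne _ _ _ (by decide)]; simp [Matrix.map_apply]
  rw [Matrix.charpoly, Matrix.det_fin_three, Matrix.det_fin_three]
  simp only [Matrix.charmatrix_apply_eq, h01, h02, h10, h12, h20, h21, Matrix.map_apply]
  push_cast
  simp only [map_add, map_mul, map_sub, map_neg, map_one]
  ring


theorem cubic_factor (t s : ℤ) (hs1 : 1 ≤ s) (hst : s + 1 ≤ t) (hd : 4*t ≤ s^2)
    (p : ℝ[X]) (hp : p = X^3 - C (t:ℝ) * X^2 + C (s:ℝ) * X - C 1) :
    ∃ l1 l2 l3 : ℝ, 0 < l1 ∧ l1 < l2 ∧ l2 < 1 ∧ 1 < l3 ∧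
      p = (X - C l1) * (X - C l2) * (X - C l3) := by
  set T : ℝ := (t:ℝ) with hT
  set S : ℝ := (s:ℝ) with hS
  have hS1 : 1 ≤ S := by rw [hS]; exact_mod_cast hs1
  have hST : S + 1 ≤ T := by rw [hS, hT]; exact_mod_cast hst
  have hD : 4*T ≤ S^2 := by rw [hS, hT]; exact_mod_cast hd
  have hT2 : 2 ≤ T := by linarith
  have hT0 : 0 < T := by linarith
  set f : ℝ → ℝ := fun x => x^3 - T*x^2 + S*x - 1 with hf
  have hev : ∀ x : ℝ, p.eval x = f x := by
    intro x; rw [hp]; simp [hf]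
  have hcont : Continuous f := by
    simp only [hf]; continuity
  set A : ℝ := S/(2*T) with hA
  have hA0 : 0 < A := by positivity
  have hA1 : A < 1 := by
    rw [hA, div_lt_one (by linarith)]; linarith
  have hfA : 0 < f A := by
    have hval : f A = S^3/(8*T^3) + S^2/(4*T) - 1 := by
      simp only [hf, hA]; field_simp; ring
    have h1 : 0 < S^3/(8*T^3) := by positivity
    have h2 : (1:ℝ) ≤ S^2/(4*T) := by
      rw [le_div_iff₀ (by linarith)]; linarith
    rw [hval]; linarith
  have hf0 : f 0 = -1 := by simp [hf]
  have hf1 : f 1 = S - T := by simp [hf]; ring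
  have hf1' : f 1 < 0 := by rw [hf1]; linarith
  have hfB : 0 < f (T+1) := by
    have : f (T+1) = (T+1)^2 + S*(T+1) - 1 := by simp only [hf]; ring
    nlinarith
  -- three roots by IVT
  obtain ⟨l1, hl1m, hl1⟩ : ∃ x ∈ Set.Icc (0:ℝ) A, f x = 0 := by
    have := intermediate_value_Icc (le_of_lt hA0) hcont.continuousOn
    have h0 : (0:ℝ) ∈ Set.Icc (f 0) (f A) := by rw [hf0]; constructor <;> linarith
    obtain ⟨x, hx, hfx⟩ := this h0
    exact ⟨x, hx, hfx⟩
  obtain ⟨l2, hl2m, hl2⟩ : ∃ x ∈ Set.Icc A 1, f x = 0 := by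
    have := intermediate_value_Icc' (le_of_lt hA1) hcont.continuousOn
    have h0 : (0:ℝ) ∈ Set.Icc (f 1) (f A) := by constructor <;> linarith
    obtain ⟨x, hx, hfx⟩ := this h0
    exact ⟨x, hx, hfx⟩
  obtain ⟨l3, hl3m, hl3⟩ : ∃ x ∈ Set.Icc (1:ℝ) (T+1), f x = 0 := by
    have := intermediate_value_Icc (by linarith : (1:ℝ) ≤ T+1) hcont.continuousOn
    have h0 : (0:ℝ) ∈ Set.Icc (f 1) (f (T+1)) := by constructor <;> linarith
    obtain ⟨x, hx, hfx⟩ := this h0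
    exact ⟨x, hx, hfx⟩
  obtain ⟨hl1a, hl1b⟩ := hl1m
  obtain ⟨hl2a, hl2b⟩ := hl2m
  obtain ⟨hl3a, hl3b⟩ := hl3m
  have h1A : l1 < A := lt_of_le_of_ne hl1b (fun h => by rw [h] at hl1; linarith)
  have h2A : A < l2 := lt_of_le_of_ne hl2a (fun h => by rw [← h] at hl2; linarith)
  have hl10 : 0 < l1 := lt_of_le_of_ne hl1a (fun h => by rw [← h] at hl1; rw [hf0] at hl1; norm_num at hl1)
  have hl21 : l2 < 1 := lt_of_le_of_ne hl2b (fun h => by rw [h] at hl2; linarith)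
  have hl31 : 1 < l3 := lt_of_le_of_ne hl3a (fun h => by rw [← h] at hl3; linarith)
  have h12 : l1 < l2 := lt_trans h1A h2A
  have h23 : l2 < l3 := lt_trans hl21 hl31
  have h13 : l1 < l3 := lt_trans h12 h23
  -- factorization
  refine ⟨l1, l2, l3, hl10, h12, hl21, hl31, ?_⟩
  have hr1 : p.IsRoot l1 := by rw [Polynomial.IsRoot, hev]; exact hl1
  obtain ⟨q, hq⟩ := (Polynomial.dvd_iff_isRoot.mpr hr1)
  have hq2 : q.eval l2 = 0 := by
    have := hev l2; rw [hq] at this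
    simp only [Polynomial.eval_mul, Polynomial.eval_sub, Polynomial.eval_X, Polynomial.eval_C] at this
    rw [hl2] at this
    have hz : (l2 - l1) * q.eval l2 = 0 := by linarith [this]
    rcases mul_eq_zero.mp hz with h | h
    · exfalso
      have h' : l2 = l1 := by linarith
      linarith
    · exact h
  obtain ⟨r, hr⟩ := (Polynomial.dvd_iff_isRoot.mpr hq2)
  have hr3 : r.eval l3 = 0 := by
    have := hev l3; rw [hq, hr] at this
    simp only [Polynomial.eval_mul, Polynomial.eval_sub, Polynomial.eval_X, Polynomial.eval_C] at this
    rw [hl3] at this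
    have h3ne1 : l3 - l1 ≠ 0 := by intro h; linarith [sub_eq_zero.mp h]
    have h3ne2 : l3 - l2 ≠ 0 := by intro h; linarith [sub_eq_zero.mp h]
    have hz : (l3 - l1) * ((l3 - l2) * r.eval l3) = 0 := by linarith [this]
    rcases mul_eq_zero.mp hz with h | h
    · exact absurd h h3ne1
    · rcases mul_eq_zero.mp h with h' | h'
      · exact absurd h' h3ne2
      · exact h'
  obtain ⟨u, hu⟩ := (Polynomial.dvd_iff_isRoot.mpr hr3)
  have hfull : p = (X - C l1) * ((X - C l2) * ((X - C l3) * u)) := by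
    rw [hq, hr, hu]
  -- p is monic of natDegree 3
  have hp' : p = C 1 * X^3 + C (-T) * X^2 + C S * X + C (-1) := by
    rw [hp]; simp only [map_neg, map_one]; ring
  have hdeg : p.natDegree = 3 := by
    rw [hp']; exact Polynomial.natDegree_cubic (by norm_num)
  have hmon : p.Monic := by
    have := Polynomial.leadingCoeff_cubic (a := (1:ℝ)) (b := -T) (c := S) (d := -1) (by norm_num)
    rw [Polynomial.Monic, Polynomial.leadingCoeff, hdeg, hp']
    rw [Polynomial.leadingCoeff, Polynomial.natDegree_cubic (by norm_num : (1:ℝ) ≠ 0)] at this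
    exact this
  have hune : u ≠ 0 := by
    intro h; rw [h, mul_zero, mul_zero, mul_zero] at hfull
    exact Polynomial.Monic.ne_zero hmon hfull
  have hXl : ∀ x : ℝ, (X - C x).natDegree = 1 := fun x => Polynomial.natDegree_X_sub_C x
  have hdeg' : u.natDegree = 0 := by
    have h1 : ((X - C l3) * u).natDegree = 1 + u.natDegree := by
      rw [Polynomial.natDegree_mul (Polynomial.X_sub_C_ne_zero l3) hune, hXl]
    have h2 : ((X - C l2) * ((X - C l3) * u)).natDegree = 1 + (1 + u.natDegree) := by
      rw [Polynomial.natDegree_mul (Polynomial.X_sub_C_ne_zero l2)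
        (mul_ne_zero (Polynomial.X_sub_C_ne_zero l3) hune), hXl, h1]
    have h3 : p.natDegree = 1 + (1 + (1 + u.natDegree)) := by
      rw [hfull, Polynomial.natDegree_mul (Polynomial.X_sub_C_ne_zero l1)
        (mul_ne_zero (Polynomial.X_sub_C_ne_zero l2)
          (mul_ne_zero (Polynomial.X_sub_C_ne_zero l3) hune)), hXl, h2]
    omega
  have hlc : u.leadingCoeff = 1 := by
    have := hmon
    rw [Polynomial.Monic, hfull] at this
    simpa [Polynomial.leadingCoeff_mul, Polynomial.leadingCoeff_X_sub_C] using this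
  have hu1 : u = 1 := by
    rw [Polynomial.eq_C_of_natDegree_eq_zero hdeg']
    rw [Polynomial.leadingCoeff, hdeg'] at hlc
    rw [hlc]; simp
  rw [hfull, hu1, mul_one, ← mul_assoc]


/-- `Inv` holds of the entries of a matrix. -/
def InvM (W : Matrix (Fin 3) (Fin 3) ℤ) : Prop :=
  Inv (W 0 0) (W 0 1) (W 0 2) (W 1 0) (W 1 1) (W 1 2) (W 2 0) (W 2 1) (W 2 2)

theorem invM_step {n : ℤ} {W : Matrix (Fin 3) (Fin 3) ℤ} (hn : 6 ≤ n) (H : InvM W) :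
    InvM (Mz n * W) := by
  have e00 : (Mz n * W) 0 0 = W 1 0 := by simp [Mz, Matrix.mul_apply, Fin.sum_univ_three]
  have e01 : (Mz n * W) 0 1 = W 1 1 := by simp [Mz, Matrix.mul_apply, Fin.sum_univ_three]
  have e02 : (Mz n * W) 0 2 = W 1 2 := by simp [Mz, Matrix.mul_apply, Fin.sum_univ_three]
  have e10 : (Mz n * W) 1 0 = W 2 0 := by simp [Mz, Matrix.mul_apply, Fin.sum_univ_three]
  have e11 : (Mz n * W) 1 1 = W 2 1 := by simp [Mz, Matrix.mul_apply, Fin.sum_univ_three]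
  have e12 : (Mz n * W) 1 2 = W 2 2 := by simp [Mz, Matrix.mul_apply, Fin.sum_univ_three]
  have e20 : (Mz n * W) 2 0 = W 0 0 - n * W 1 0 + (n+1) * W 2 0 := by
    simp [Mz, Matrix.mul_apply, Fin.sum_univ_three]; ring
  have e21 : (Mz n * W) 2 1 = W 0 1 - n * W 1 1 + (n+1) * W 2 1 := by
    simp [Mz, Matrix.mul_apply, Fin.sum_univ_three]; ring
  have e22 : (Mz n * W) 2 2 = W 0 2 - n * W 1 2 + (n+1) * W 2 2 := by
    simp [Mz, Matrix.mul_apply, Fin.sum_univ_three]; ring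
  unfold InvM
  rw [e00, e01, e02, e10, e11, e12, e20, e21, e22]
  exact H.step hn

theorem invM_base3 {n1 n2 n3 : ℤ} (h1 : 6 ≤ n1) (h2 : 6 ≤ n2) (h3 : 6 ≤ n3) :
    InvM (Mz n1 * (Mz n2 * Mz n3)) := by
  have hW3 : Mz n1 * (Mz n2 * Mz n3) = Matrix.of ![![1, -n3, n3+1],
      ![n2+1, 1-(n2+1)*n3, (n2+1)*n3+1],
      ![(n1+1)*(n2+1)-n1, n1*n3+(n1+1)*(1-(n2+1)*n3), 1-n1*(n3+1)+(n1+1)*((n2+1)*n3+1)]] := by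
    ext i j
    fin_cases i <;> fin_cases j <;>
      simp [Mz, Matrix.mul_apply, Fin.sum_univ_three, -mul_eq_mul_left_iff,
        -mul_eq_mul_right_iff] <;> ring
  rw [hW3]
  exact base3 h1 h2 h3

theorem inv_prod : ∀ (l : List ℤ), (∀ m ∈ l, 6 ≤ m) → 3 ≤ l.length →
    InvM ((l.map Mz).prod)
  | [n1, n2, n3], hl, _ => by
      have h1 : 6 ≤ n1 := hl _ (by simp)
      have h2 : 6 ≤ n2 := hl _ (by simp)
      have h3 : 6 ≤ n3 := hl _ (by simp)
      have hW : ((([n1, n2, n3] : List ℤ).map Mz).prod) = Mz n1 * (Mz n2 * Mz n3) := by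
        simp [List.prod_cons, Matrix.mul_assoc]
      rw [hW]
      exact invM_base3 h1 h2 h3
  | n :: m1 :: m2 :: m3 :: t, hl, _ => by
      have hrec := inv_prod (m1 :: m2 :: m3 :: t)
        (fun x hx => hl x (List.mem_cons_of_mem _ hx)) (by simp)
      have hn : 6 ≤ n := hl n (by simp)
      rw [List.map_cons, List.prod_cons]
      exact invM_step hn hrec

/-- Scalar data needed for the final argument. -/
theorem key_facts {W : Matrix (Fin 3) (Fin 3) ℤ} (H : InvM W) :
    1 ≤ (W 1 1 * W 2 2 - W 1 2 * W 2 1) + (W 2 2 * W 0 0 - W 2 0 * W 0 2)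
        + (W 0 0 * W 1 1 - W 0 1 * W 1 0) ∧
    ((W 1 1 * W 2 2 - W 1 2 * W 2 1) + (W 2 2 * W 0 0 - W 2 0 * W 0 2)
        + (W 0 0 * W 1 1 - W 0 1 * W 1 0)) + 1 ≤ W 0 0 + W 1 1 + W 2 2 ∧
    4*(W 0 0 + W 1 1 + W 2 2) ≤ ((W 1 1 * W 2 2 - W 1 2 * W 2 1)
        + (W 2 2 * W 0 0 - W 2 0 * W 0 2) + (W 0 0 * W 1 1 - W 0 1 * W 1 0))^2 := by
  obtain ⟨hs1, hs2, hs3⟩ := consequences H.r0x H.r0y H.r0w0 H.r0w1 H.d1x H.d1y H.d1w0 H.d1w1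
    H.d2x H.d2y H.d2w0 H.d2w1 H.C1_1 H.C1_2 H.C2_1 H.C2_2 H.C3_1 H.C4_0 H.D1_1 H.D4_0
    H.X2 H.X3 H.X4 H.A1
  refine ⟨by linarith, by linarith, by nlinarith [hs3]⟩

end MonoidPisotAux

open MonoidPisotAux in
open Polynomial in
theorem monoid_pisot (l : List ℤ) (hne : l ≠ []) (hl : ∀ n ∈ l, 6 ≤ n) :
    let M : ℤ → Matrix (Fin 3) (Fin 3) ℤ := fun n => !![0, 1, 0; 0, 0, 1; 1, -n, n+1]
    let W : Matrix (Fin 3) (Fin 3) ℤ := (l.map M).prod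
    W.det = 1 ∧
    ∃ l1 l2 l3 : ℝ, 0 < l1 ∧ l1 < l2 ∧ l2 < 1 ∧ 1 < l3 ∧
      Matrix.charpoly (W.map (Int.cast : ℤ → ℝ)) =
        (X - C l1) * (X - C l2) * (X - C l3) := by
  intro M W
  have hMW : W = ((l.map Mz).prod) := rfl
  have hdet : W.det = 1 := by rw [hMW]; exact det_prod l
  refine ⟨hdet, ?_⟩
  have hp := charpoly_W W
  rw [hdet] at hp
  rw [show ((1:ℤ):ℝ) = 1 from by norm_num] at hp
  -- get the integer inequalities for the coefficients, by cases on the length of `l`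
  have hkey : 1 ≤ (W 1 1 * W 2 2 - W 1 2 * W 2 1) + (W 2 2 * W 0 0 - W 2 0 * W 0 2)
        + (W 0 0 * W 1 1 - W 0 1 * W 1 0) ∧
      ((W 1 1 * W 2 2 - W 1 2 * W 2 1) + (W 2 2 * W 0 0 - W 2 0 * W 0 2)
        + (W 0 0 * W 1 1 - W 0 1 * W 1 0)) + 1 ≤ W 0 0 + W 1 1 + W 2 2 ∧
      4*(W 0 0 + W 1 1 + W 2 2) ≤ ((W 1 1 * W 2 2 - W 1 2 * W 2 1)
        + (W 2 2 * W 0 0 - W 2 0 * W 0 2) + (W 0 0 * W 1 1 - W 0 1 * W 1 0))^2 := by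
    match l, hne, hl with
    | [n], _, hl =>
      have hn : 6 ≤ n := hl n (by simp)
      have hW1 : W = Mz n := by rw [hMW]; simp
      have e00 : W 0 0 = 0 := by rw [hW1]; simp [Mz]
      have e01 : W 0 1 = 1 := by rw [hW1]; simp [Mz]
      have e02 : W 0 2 = 0 := by rw [hW1]; simp [Mz]
      have e10 : W 1 0 = 0 := by rw [hW1]; simp [Mz]
      have e11 : W 1 1 = 0 := by rw [hW1]; simp [Mz]
      have e12 : W 1 2 = 1 := by rw [hW1]; simp [Mz]
      have e20 : W 2 0 = 1 := by rw [hW1]; simp [Mz]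
      have e21 : W 2 1 = -n := by rw [hW1]; simp [Mz]
      have e22 : W 2 2 = n+1 := by rw [hW1]; simp [Mz]
      rw [e00, e01, e02, e10, e11, e12, e20, e21, e22]
      have h6n : (0:ℤ) ≤ n - 6 := by linarith
      refine ⟨by nlinarith, by nlinarith,
        by nlinarith [mul_nonneg h6n (by linarith : (0:ℤ) ≤ n + 2)]⟩
    | [n, m], _, hl =>
      have hn : 6 ≤ n := hl n (by simp)
      have hm : 6 ≤ m := hl m (by simp)
      have hW1 : W = Mz n * Mz m := by rw [hMW]; simp
      have e00 : W 0 0 = 0 := by rw [hW1]; simp [Mz, Matrix.mul_apply, Fin.sum_univ_three]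
      have e01 : W 0 1 = 0 := by rw [hW1]; simp [Mz, Matrix.mul_apply, Fin.sum_univ_three]
      have e02 : W 0 2 = 1 := by rw [hW1]; simp [Mz, Matrix.mul_apply, Fin.sum_univ_three]
      have e10 : W 1 0 = 1 := by rw [hW1]; simp [Mz, Matrix.mul_apply, Fin.sum_univ_three]
      have e11 : W 1 1 = -m := by rw [hW1]; simp [Mz, Matrix.mul_apply, Fin.sum_univ_three]
      have e12 : W 1 2 = m+1 := by rw [hW1]; simp [Mz, Matrix.mul_apply, Fin.sum_univ_three]
      have e20 : W 2 0 = n+1 := by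
        rw [hW1]; simp [Mz, Matrix.mul_apply, Fin.sum_univ_three]
      have e21 : W 2 1 = 1-(n+1)*m := by
        rw [hW1]; simp [Mz, Matrix.mul_apply, Fin.sum_univ_three]; ring
      have e22 : W 2 2 = (n+1)*m+1 := by
        rw [hW1]; simp [Mz, Matrix.mul_apply, Fin.sum_univ_three]; ring
      rw [e00, e01, e02, e10, e11, e12, e20, e21, e22]
      have h6n : (0:ℤ) ≤ n - 6 := by linarith
      have h6m : (0:ℤ) ≤ m - 6 := by linarith
      have hnm := mul_nonneg h6n h6m
      have hs22 : 22 ≤ (n-1)*m - n - 2 := by nlinarith [mul_nonneg h6n (by linarith : (0:ℤ) ≤ m - 1)]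
      refine ⟨by nlinarith, by nlinarith, ?_⟩
      have hsq : 22*((n-1)*m - n - 2) ≤ ((n-1)*m - n - 2)*((n-1)*m - n - 2) :=
        mul_le_mul_of_nonneg_right hs22 (by linarith)
      nlinarith [hsq, hnm]
    | n1 :: n2 :: n3 :: t, _, hl =>
      have hInv : InvM W := by
        rw [hMW]; exact inv_prod _ hl (by simp)
      exact key_facts hInv
  obtain ⟨hk1, hk2, hk3⟩ := hkey
  exact cubic_factor _ _ hk1 hk2 (by nlinarith [hk3]) _ hp
end

section
/- Let n ≥ 7 and let λ₂ be the root of q_n with 3/4 ≤ λ₂ < 1. If ω = c·η₃ - b·η₁ = (c, -3c-b, c) with positive integers b, c, where η₁ = (0,1,0) and η₃ = (1,-3,1), then c - (3c+b)λ₂ + cλ₂² ≤ -1. -/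
theorem case2_y_coordinate (n : ℤ) (hn : 7 ≤ n) (l : ℝ)
    (hroot : l^3 - (n+1)*l^2 + n*l - 1 = 0) (h0 : 3/4 ≤ l) (h1 : l < 1)
    (b c : ℤ) (hb : 1 ≤ b) (hc : 1 ≤ c) :
    (c:ℝ) - (3*c + b)*l + c*l^2 ≤ -1 := by
  have hb' : (1:ℝ) ≤ (b:ℝ) := by exact_mod_cast hb
  have hc' : (1:ℝ) ≤ (c:ℝ) := by exact_mod_cast hc
  nlinarith [mul_le_mul_of_nonneg_left (show 1 - 3*l + l^2 ≤ -11/16 by nlinarith) (le_trans zero_le_one hc'),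
    mul_le_mul_of_nonneg_right hb' (by linarith : (0:ℝ) ≤ l)]
end

section
/- Suppose 0 < λ₁ ≤ 1/5 and 3/4 ≤ λ₂ < 1 are real numbers. For ω = c·η₃ - a·η₀ - b·η₁ = (a+c, -3c-a-b, c) with positive integers a, b, c, let π_x(ω) = (a+c) - (3c+a+b)λ₁ + cλ₁² and π_y(ω) = (a+c) - (3c+a+b)λ₂ + cλ₂². Then |π_y(ω) - π_x(ω)| ≥ 2, so π_x(ω) and π_y(ω) cannot both lie in the open interval (-1,1). -/
theorem case6_projection_gap (l1 l2 : ℝ) (h1 : 0 < l1) (h1' : l1 ≤ 1/5)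
    (h2 : 3/4 ≤ l2) (h2' : l2 < 1) (a b c : ℤ) (ha : 1 ≤ a) (hb : 1 ≤ b) (hc : 1 ≤ c) :
    let πx : ℝ := ((a:ℝ) + c) - (3*c + a + b)*l1 + c*l1^2
    let πy : ℝ := ((a:ℝ) + c) - (3*c + a + b)*l2 + c*l2^2
    2 ≤ |πy - πx| ∧ ¬((-1 < πx ∧ πx < 1) ∧ (-1 < πy ∧ πy < 1)) := by
  intro πx πy
  have ha' : (1:ℝ) ≤ (a:ℝ) := by exact_mod_cast ha
  have hb' : (1:ℝ) ≤ (b:ℝ) := by exact_mod_cast hb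
  have hc' : (1:ℝ) ≤ (c:ℝ) := by exact_mod_cast hc
  have key : 2 ≤ πx - πy := by
    have hfac : πx - πy = (l2 - l1) * ((a:ℝ) + b + c*(3 - l1 - l2)) := by
      simp only [πx, πy]; ring
    rw [hfac]
    have h3 : (11:ℝ)/20 ≤ l2 - l1 := by linarith
    have h4 : (19:ℝ)/5 ≤ (a:ℝ) + b + c*(3 - l1 - l2) := by nlinarith
    nlinarith
  have habs : 2 ≤ |πy - πx| := by
    rw [abs_sub_comm]
    calc (2:ℝ) ≤ πx - πy := key
    _ ≤ |πx - πy| := le_abs_self _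
  refine ⟨habs, ?_⟩
  rintro ⟨⟨_, hx⟩, ⟨hy, _⟩⟩
  linarith
end

section
/- For every integer n ≥ 6, the roots of q_n are monotone in n in the following sense: if λ₁ⁿ < λ₂ⁿ < λ₃ⁿ denote the three roots of q_n and λ₁ⁿ⁺¹ < λ₂ⁿ⁺¹ < λ₃ⁿ⁺¹ the three roots of q_{n+1}, then λ₁ⁿ⁺¹ < λ₁ⁿ, λ₂ⁿ⁺¹ > λ₂ⁿ, and λ₃ⁿ⁺¹ > λ₃ⁿ. -/
/-- A monic cubic of this form with three distinct roots factors completely. -/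
lemma cubic_factor (a l1 l2 l3 : ℝ)
    (h1 : l1^3 - (a+1)*l1^2 + a*l1 - 1 = 0)
    (h2 : l2^3 - (a+1)*l2^2 + a*l2 - 1 = 0)
    (h3 : l3^3 - (a+1)*l3^2 + a*l3 - 1 = 0)
    (h12 : l1 ≠ l2) (h13 : l1 ≠ l3) (h23 : l2 ≠ l3) :
    ∀ x : ℝ, x^3 - (a+1)*x^2 + a*x - 1 = (x-l1)*(x-l2)*(x-l3) := by
  have hA : l1^2 + l1*l2 + l2^2 - (a+1)*(l1+l2) + a = 0 := by
    have h : (l1 - l2) * (l1^2 + l1*l2 + l2^2 - (a+1)*(l1+l2) + a) = 0 := by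
      linear_combination h1 - h2
    rcases mul_eq_zero.mp h with h | h
    · exact absurd (sub_eq_zero.mp h) h12
    · exact h
  have hB : l1^2 + l1*l3 + l3^2 - (a+1)*(l1+l3) + a = 0 := by
    have h : (l1 - l3) * (l1^2 + l1*l3 + l3^2 - (a+1)*(l1+l3) + a) = 0 := by
      linear_combination h1 - h3
    rcases mul_eq_zero.mp h with h | h
    · exact absurd (sub_eq_zero.mp h) h13
    · exact h
  have hs : l1 + l2 + l3 = a + 1 := by
    have h : (l2 - l3) * (l1 + l2 + l3 - (a+1)) = 0 := by
      linear_combination hA - hB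
    rcases mul_eq_zero.mp h with h | h
    · exact absurd (sub_eq_zero.mp h) h23
    · linarith [sub_eq_zero.mp h]
  have he2 : l1*l2 + l1*l3 + l2*l3 = a := by
    linear_combination -hA + (l1 + l2) * hs
  have he3 : l1*l2*l3 = 1 := by
    linear_combination h1 - l1^2 * hs + l1 * he2
  intro x
  linear_combination x^2 * hs - x * he2 + he3

lemma pos_case (c l1 l2 l3 : ℝ) (ho1 : l1 < l2) (ho2 : l2 < l3)
    (h : 0 < (c-l1)*(c-l2)*(c-l3)) : (l1 < c ∧ c < l2) ∨ l3 < c := by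
  rcases lt_or_ge l3 c with h3 | h3
  · exact Or.inr h3
  rcases lt_or_ge c l2 with h2 | h2
  · rcases lt_or_ge l1 c with h1 | h1
    · exact Or.inl ⟨h1, h2⟩
    · exfalso
      have := mul_nonneg (mul_nonneg (by linarith : (0:ℝ) ≤ l1 - c)
        (by linarith : (0:ℝ) ≤ l2 - c)) (by linarith : (0:ℝ) ≤ l3 - c)
      nlinarith
  · exfalso
    have := mul_nonneg (mul_nonneg (by linarith : (0:ℝ) ≤ c - l1)
      (by linarith : (0:ℝ) ≤ c - l2)) (by linarith : (0:ℝ) ≤ l3 - c)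
    nlinarith

lemma neg_case (c l1 l2 l3 : ℝ) (ho1 : l1 < l2) (ho2 : l2 < l3)
    (h : (c-l1)*(c-l2)*(c-l3) < 0) : c < l1 ∨ (l2 < c ∧ c < l3) := by
  rcases lt_or_ge c l1 with h1 | h1
  · exact Or.inl h1
  rcases lt_or_ge c l3 with h3 | h3
  · rcases lt_or_ge l2 c with h2 | h2
    · exact Or.inr ⟨h2, h3⟩
    · exfalso
      have := mul_nonneg (mul_nonneg (by linarith : (0:ℝ) ≤ c - l1)
        (by linarith : (0:ℝ) ≤ l2 - c)) (by linarith : (0:ℝ) ≤ l3 - c)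
      nlinarith
  · exfalso
    have := mul_nonneg (mul_nonneg (by linarith : (0:ℝ) ≤ c - l1)
      (by linarith : (0:ℝ) ≤ c - l2)) (by linarith : (0:ℝ) ≤ c - l3)
    nlinarith

lemma root_bounds (a l1 l2 l3 : ℝ) (ha : 6 ≤ a) (ho1 : l1 < l2) (ho2 : l2 < l3)
    (hf : ∀ x : ℝ, x^3 - (a+1)*x^2 + a*x - 1 = (x-l1)*(x-l2)*(x-l3)) :
    0 < l1 ∧ l2 < 1 ∧ 1 < l3 := by
  have hprod : l1 * l2 * l3 = 1 := by linear_combination hf 0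
  have h1 : (1-l1)*(1-l2)*(1-l3) < 0 := by
    have h := hf 1; linarith
  have hc1 : l2 < 1 ∧ 1 < l3 := by
    rcases neg_case 1 l1 l2 l3 ho1 ho2 h1 with h | h
    · exfalso
      have h12 : 1 < l1 * l2 := by nlinarith
      nlinarith
    · exact h
  have hhalf : 0 < ((1:ℝ)/2 - l1)*((1:ℝ)/2 - l2)*((1:ℝ)/2 - l3) := by
    have h : (a/4 - 9/8 : ℝ) = ((1:ℝ)/2 - l1)*((1:ℝ)/2 - l2)*((1:ℝ)/2 - l3) := by
      linear_combination hf (1/2)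
    nlinarith
  have hc2 : l1 < 1/2 ∧ (1:ℝ)/2 < l2 := by
    rcases pos_case (1/2) l1 l2 l3 ho1 ho2 hhalf with h | h
    · exact h
    · exfalso; linarith [hc1.2]
  have h0 : ((0:ℝ)-l1)*((0:ℝ)-l2)*((0:ℝ)-l3) < 0 := by
    have h := hf 0; linarith
  have hc3 : 0 < l1 := by
    rcases neg_case 0 l1 l2 l3 ho1 ho2 h0 with h | h
    · exact h
    · exfalso; linarith [hc2.2, h.1]
  exact ⟨hc3, hc1.1, hc1.2⟩

theorem roots_monotone (n : ℤ) (hn : 6 ≤ n)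
    (l1 l2 l3 m1 m2 m3 : ℝ)
    (hl1 : l1^3 - (n+1)*l1^2 + n*l1 - 1 = 0)
    (hl2 : l2^3 - (n+1)*l2^2 + n*l2 - 1 = 0)
    (hl3 : l3^3 - (n+1)*l3^2 + n*l3 - 1 = 0)
    (hlo : l1 < l2 ∧ l2 < l3)
    (hm1 : m1^3 - (n+2)*m1^2 + (n+1)*m1 - 1 = 0)
    (hm2 : m2^3 - (n+2)*m2^2 + (n+1)*m2 - 1 = 0)
    (hm3 : m3^3 - (n+2)*m3^2 + (n+1)*m3 - 1 = 0)
    (hmo : m1 < m2 ∧ m2 < m3) :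
    m1 < l1 ∧ l2 < m2 ∧ l3 < m3 := by
  obtain ⟨hlo1, hlo2⟩ := hlo
  obtain ⟨hmo1, hmo2⟩ := hmo
  have hn' : (6:ℝ) ≤ (n:ℝ) := by exact_mod_cast hn
  have hq := cubic_factor (n:ℝ) l1 l2 l3 hl1 hl2 hl3 hlo1.ne (hlo1.trans hlo2).ne hlo2.ne
  have hp := cubic_factor ((n:ℝ)+1) m1 m2 m3 (by linear_combination hm1) (by linear_combination hm2)
      (by linear_combination hm3) hmo1.ne (hmo1.trans hmo2).ne hmo2.ne
  obtain ⟨hL1, hL2, hL3⟩ := root_bounds (n:ℝ) l1 l2 l3 hn' hlo1 hlo2 hq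
  obtain ⟨hM1, hM2, hM3⟩ := root_bounds ((n:ℝ)+1) m1 m2 m3 (by linarith) hmo1 hmo2 hp
  have hv1 : (l1-m1)*(l1-m2)*(l1-m3) = l1*(1-l1) := by
    linear_combination hl1 - hp l1
  have g1 : m1 < l1 := by
    have hpos : 0 < (l1-m1)*(l1-m2)*(l1-m3) := by
      rw [hv1]; exact mul_pos hL1 (by linarith)
    rcases pos_case l1 m1 m2 m3 hmo1 hmo2 hpos with h | h
    · exact h.1
    · exfalso; linarith
  have hv2 : (l2-m1)*(l2-m2)*(l2-m3) = l2*(1-l2) := by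
    linear_combination hl2 - hp l2
  have g2 : l2 < m2 := by
    have hpos : 0 < (l2-m1)*(l2-m2)*(l2-m3) := by
      rw [hv2]; exact mul_pos (by linarith) (by linarith)
    rcases pos_case l2 m1 m2 m3 hmo1 hmo2 hpos with h | h
    · exact h.2
    · exfalso; linarith
  have hv3 : (l3-m1)*(l3-m2)*(l3-m3) = l3*(1-l3) := by
    linear_combination hl3 - hp l3
  have g3 : l3 < m3 := by
    have hneg : (l3-m1)*(l3-m2)*(l3-m3) < 0 := by
      rw [hv3]; exact mul_neg_of_pos_of_neg (by linarith) (by linarith)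
    rcases neg_case l3 m1 m2 m3 hmo1 hmo2 hneg with h | h
    · exfalso; linarith
    · exact h.2
  exact ⟨g1, g2, g3⟩
end
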